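/- Let p₁,…,p_m be distinct odd primes, M = ∏p_i, and for integer x set ξ_i = [x·M_i^{-1}]_{p_i}. Let h be a positive integer with m/2^h < 1/4, s_i = ⌊2^h·ξ_i/p_i⌋, and σ(x) = Σ_i s_i/2^h. Then {σ(x)} = ρ(x) − ⌊σ(x)⌋ + [x]_M/M − α for some real α with 0 ≤ α < 1/4, where {·} denotes fractional part and ρ(x) the rank. -/
import Mathlib


/-- Rank approximation: with h such that m/2^h < 1/4, sᵢ = ⌊2^h·ξᵢ/pᵢ⌋ and
σ(x) = Σ sᵢ/2^h, one has {σ(x)} = ρ(x) − ⌊σ(x)⌋ + [x]_M/M − α with 0 ≤ α < 1/4. -/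
theorem rank_approximation (m : ℕ) (hm : 0 < m) (p : Fin m → ℕ)
    (hprime : ∀ i, (p i).Prime) (hodd : ∀ i, Odd (p i))
    (hinj : Function.Injective p)
    (M : ℕ) (hM : M = ∏ i, p i)
    (x : ℤ) (ξ : Fin m → ℕ)
    (hξ : ∀ i, ξ i = ((x : ZMod (p i)) * ((M / p i : ℕ) : ZMod (p i))⁻¹).val)
    (ρ : ℤ) (hρ0 : 0 ≤ ρ) (hρm : ρ < m)
    (hrank : (∑ i, ((M / p i : ℕ) : ℤ) * (ξ i : ℤ)) = ρ * M + x % M)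
    (h : ℕ) (hh : 0 < h) (hh4 : (m : ℝ) / 2 ^ h < 1 / 4)
    (s : Fin m → ℕ) (hs : ∀ i, s i = 2 ^ h * ξ i / p i)
    (σ : ℝ) (hσ : σ = ∑ i, (s i : ℝ) / 2 ^ h) :
    ∃ α : ℝ, 0 ≤ α ∧ α < 1 / 4 ∧
      Int.fract σ = (ρ : ℝ) - (⌊σ⌋ : ℝ) + ((x % M : ℤ) : ℝ) / M - α := by
  have hMpos : 0 < M := by
    rw [hM]; exact Finset.prod_pos fun i _ => (hprime i).pos
  have hMR : (0:ℝ) < (M:ℝ) := by exact_mod_cast hMpos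
  have hdvd : ∀ i, p i ∣ M := fun i => hM ▸ Finset.dvd_prod_of_mem _ (Finset.mem_univ i)
  have hpR : ∀ i, (0:ℝ) < (p i : ℝ) := fun i => by exact_mod_cast (hprime i).pos
  have h2h : (0:ℝ) < (2:ℝ) ^ h := by positivity
  -- key identity
  have key : (∑ i, (ξ i : ℝ) / p i) = (ρ:ℝ) + ((x % M : ℤ):ℝ) / M := by
    have hc : ((∑ i, ((M / p i : ℕ) : ℤ) * (ξ i : ℤ) : ℤ) : ℝ) = ((ρ * M + x % M : ℤ) : ℝ) := by
      rw [hrank]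
    simp only [Int.cast_sum, Int.cast_mul, Int.cast_natCast, Int.cast_add] at hc
    have hterm : ∀ i, ((M / p i : ℕ) : ℝ) * (ξ i : ℝ) = (M:ℝ) * ((ξ i : ℝ) / p i) := by
      intro i
      rw [Nat.cast_div (hdvd i) (hpR i).ne']
      field_simp
    rw [Finset.sum_congr rfl (fun i _ => hterm i), ← Finset.mul_sum] at hc
    field_simp at hc ⊢
    linarith [hc]
  -- per-term bounds
  have hlow : ∀ i, (s i : ℝ) / 2 ^ h ≤ (ξ i : ℝ) / p i := by
    intro i
    rw [div_le_div_iff₀ h2h (hpR i)]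
    have : (s i) * p i ≤ 2 ^ h * ξ i := hs i ▸ Nat.div_mul_le_self _ _
    calc (s i : ℝ) * p i ≤ (2:ℝ) ^ h * ξ i := by exact_mod_cast this
      _ = (ξ i : ℝ) * 2 ^ h := by ring
  have hupp : ∀ i, (ξ i : ℝ) / p i < ((s i : ℝ) + 1) / 2 ^ h := by
    intro i
    rw [div_lt_div_iff₀ (hpR i) h2h]
    have h2 : 2 ^ h * ξ i < (s i + 1) * p i := by
      have h1 := Nat.div_add_mod (2 ^ h * ξ i) (p i)
      have h3 := Nat.mod_lt (2 ^ h * ξ i) (hprime i).pos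
      rw [hs i]
      nlinarith [h1, h3]
    calc (ξ i : ℝ) * 2 ^ h = ((2 ^ h * ξ i : ℕ) : ℝ) := by push_cast; ring
      _ < (((s i + 1) * p i : ℕ) : ℝ) := by exact_mod_cast h2
      _ = ((s i : ℝ) + 1) * p i := by push_cast; ring
  have hσle : σ ≤ ∑ i, (ξ i : ℝ) / p i := by
    rw [hσ]; exact Finset.sum_le_sum fun i _ => hlow i
  have hσgt : (∑ i, (ξ i : ℝ) / p i) < σ + m / 2 ^ h := by
    have : (∑ i, (ξ i : ℝ) / p i) < ∑ i, ((s i : ℝ) + 1) / 2 ^ h :=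
      Finset.sum_lt_sum_of_nonempty (Finset.univ_nonempty_iff.2 (Fin.pos_iff_nonempty.1 hm))
        (fun i _ => hupp i)
    have heq : (∑ i, ((s i : ℝ) + 1) / 2 ^ h) = σ + m / 2 ^ h := by
      rw [hσ, ← Finset.sum_div, ← Finset.sum_div, Finset.sum_add_distrib,
        Finset.sum_const, Finset.card_univ, Fintype.card_fin, nsmul_eq_mul, mul_one, add_div]
    linarith
  refine ⟨(ρ:ℝ) + ((x % M : ℤ):ℝ) / M - σ, by linarith [key ▸ hσle], by linarith, ?_⟩
  rw [Int.fract]; ring
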